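/- arXiv:1604.04656 — 2 statements merged into one kernel-verified Lean document; each statement's English description precedes it below -/
import Mathlib

section
/- Under the MAR assumption, for any real cut point c, the variance of the mean-score single-observation term X = 1_{T ≥ c} · ( V·D + (1 − V)·ρ ) equals Var(X) = β(1 − β) − E[ (1 − π) · 1_{T ≥ c} · ρ(1 − ρ) ], where β = ℙ(T ≥ c, D = 1). -/
/-!
Write `Y = V D + (1 - V) ρ` and `S = {T ≥ c} ∈ 𝒢`. Under MAR, `E[V D | 𝒢] = π ρ`, so
`E[Y | 𝒢] = π ρ + (1 - π) ρ = ρ`. Since `V` and `D` are binary, `Y² = V D + (1 - V) ρ²`, whence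
`E[Y² | 𝒢] = ρ - (1 - π) ρ (1 - ρ)`. Integrating over `S` gives `E[1_S Y] = E[1_S D] = β` and
`E[1_S Y²] = β - E[(1 - π) 1_S ρ (1 - ρ)]`, and the variance is the difference of the two moments.
-/

open MeasureTheory ProbabilityTheory

section MeanScore

variable {Ω : Type*} {mΩ : MeasurableSpace Ω} {μ : Measure Ω}

/-- The mean-score term `V D + (1 - V) g`: the observed disease status where verified, and the
imputation `g` elsewhere. -/
def meanScore (V D g : Ω → ℝ) (ω : Ω) : ℝ := V ω * D ω + (1 - V ω) * g ω

lemma meanScore_sq {V D : Ω → ℝ} (hV : ∀ ω, V ω = 0 ∨ V ω = 1) (hD : ∀ ω, D ω = 0 ∨ D ω = 1)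
    (g : Ω → ℝ) (ω : Ω) : meanScore V D g ω ^ 2 = meanScore V D (g ^ 2) ω := by
  rcases hV ω with h | h <;> rcases hD ω with h' | h' <;> simp [meanScore, h, h']

lemma memLp_meanScore [IsFiniteMeasure μ] {V D g : Ω → ℝ} (hV : Measurable V)
    (hD : Measurable D) (hV01 : ∀ ω, V ω = 0 ∨ V ω = 1) (hD01 : ∀ ω, D ω = 0 ∨ D ω = 1)
    (hg : AEStronglyMeasurable g μ) (hg1 : ∀ᵐ ω ∂μ, |g ω| ≤ 1) (p : ENNReal) :
    MemLp (meanScore V D g) p μ := by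
  refine MemLp.of_bound (((hV.mul hD).aestronglyMeasurable).add
    ((measurable_const.sub hV).aestronglyMeasurable.mul hg)) 1 ?_
  filter_upwards [hg1] with ω hω
  rcases hV01 ω with h | h <;> rcases hD01 ω with h' | h' <;> simp [meanScore, h, h', hω]

lemma integrable_of_forall_eq_zero_or_one [IsFiniteMeasure μ] {f : Ω → ℝ} (hf : Measurable f)
    (h01 : ∀ ω, f ω = 0 ∨ f ω = 1) : Integrable f μ :=
  Integrable.of_bound hf.aestronglyMeasurable 1
    (ae_of_all _ fun ω => by rcases h01 ω with h | h <;> simp [h])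

lemma eq_indicator_preimage_one {f : Ω → ℝ} (h01 : ∀ ω, f ω = 0 ∨ f ω = 1) :
    f = (f ⁻¹' {1}).indicator 1 := by
  funext ω
  rcases h01 ω with h | h <;> simp [h]

lemma setIntegral_eq_measureReal_inter_of_forall_eq_zero_or_one {D : Ω → ℝ} (hD : Measurable D)
    (hD01 : ∀ ω, D ω = 0 ∨ D ω = 1) (S : Set Ω) :
    ∫ ω in S, D ω ∂μ = μ.real {ω | ω ∈ S ∧ D ω = 1} := by
  conv_lhs => rw [eq_indicator_preimage_one hD01]
  rw [setIntegral_indicator (hD (measurableSet_singleton 1))]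
  simp [Set.inter_def]

lemma abs_condExp_le_one_of_forall_eq_zero_or_one {m : MeasurableSpace Ω} {f : Ω → ℝ}
    (h01 : ∀ ω, f ω = 0 ∨ f ω = 1) : ∀ᵐ ω ∂μ, |μ[f | m] ω| ≤ 1 :=
  ae_bdd_abs_condExp_of_ae_bdd_abs (ae_of_all _ fun ω => by rcases h01 ω with h | h <;> simp [h])

lemma condExp_mul_ae_eq_of_condIndepFun [StandardBorelSpace Ω] [Nonempty Ω] [IsFiniteMeasure μ]
    {V D : Ω → ℝ} (hV : Measurable V) (hD : Measurable D) (hV01 : ∀ ω, V ω = 0 ∨ V ω = 1)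
    (hD01 : ∀ ω, D ω = 0 ∨ D ω = 1) {m : MeasurableSpace Ω} {hm : m ≤ mΩ}
    (hVD : CondIndepFun m hm V D μ) :
    μ[V * D | m] =ᵐ[μ] μ[V | m] * μ[D | m] := by
  have h := (condIndepFun_iff_condExp_inter_preimage_eq_mul (mΩ := mΩ) hV hD).mp hVD {1} {1}
    (measurableSet_singleton 1) (measurableSet_singleton 1)
  rw [eq_indicator_preimage_one hV01, eq_indicator_preimage_one hD01, ← Set.inter_indicator_one]
  exact h

lemma condExp_meanScore_ae_eq [StandardBorelSpace Ω] [Nonempty Ω] [IsFiniteMeasure μ]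
    {V D g : Ω → ℝ} (hV : Measurable V) (hD : Measurable D) (hV01 : ∀ ω, V ω = 0 ∨ V ω = 1)
    (hD01 : ∀ ω, D ω = 0 ∨ D ω = 1) (hgi : Integrable g μ) {m : MeasurableSpace Ω}
    {hm : m ≤ mΩ} (hVD : CondIndepFun m hm V D μ) (hg : StronglyMeasurable[m] g) :
    μ[meanScore V D g | m] =ᵐ[μ] fun ω => μ[V | m] ω * μ[D | m] ω + (1 - μ[V | m] ω) * g ω := by
  have hVi : Integrable V μ := integrable_of_forall_eq_zero_or_one hV hV01
  have h1Vi : Integrable (1 - V) μ := (integrable_const 1).sub hVi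
  have hg1Vi : Integrable (g * (1 - V)) μ := by
    refine hgi.mono (hgi.aestronglyMeasurable.mul h1Vi.aestronglyMeasurable) (ae_of_all _ ?_)
    intro ω
    rcases hV01 ω with h | h <;> simp [h]
  have hVDi : Integrable (V * D) μ :=
    integrable_of_forall_eq_zero_or_one (hV.mul hD) fun ω => by
      rcases hV01 ω with h | h <;> simp [h, hD01 ω]
  have h1V : μ[1 - V | m] =ᵐ[μ] 1 - μ[V | m] := by
    have h := condExp_sub (integrable_const (1 : ℝ)) hVi m
    rwa [condExp_const hm] at h
  have hsplit : meanScore V D g = V * D + g * (1 - V) := by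
    funext ω; simp only [meanScore, Pi.add_apply, Pi.mul_apply, Pi.sub_apply, Pi.one_apply]; ring
  rw [hsplit]
  filter_upwards [condExp_add hVDi hg1Vi m,
    condExp_mul_ae_eq_of_condIndepFun hV hD hV01 hD01 hVD,
    condExp_mul_of_stronglyMeasurable_left hg hg1Vi h1Vi, h1V] with ω hadd hmul hpull hsub
  simp only [hadd, Pi.add_apply, hmul, hpull, Pi.mul_apply, hsub, Pi.sub_apply, Pi.one_apply]
  ring

lemma setIntegral_eq_of_condExp_ae_eq [IsFiniteMeasure μ] {m : MeasurableSpace Ω}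
    (hm : m ≤ mΩ) {S : Set Ω} (hS : MeasurableSet[m] S) {f g : Ω → ℝ} (hf : Integrable f μ)
    (hfg : μ[f | m] =ᵐ[μ] g) : ∫ ω in S, f ω ∂μ = ∫ ω in S, g ω ∂μ := by
  rw [← setIntegral_condExp hm hf hS]
  exact integral_congr_ae (ae_restrict_of_ae hfg)

lemma variance_indicator_eq_of_condExp_ae_eq [IsProbabilityMeasure μ] {m : MeasurableSpace Ω}
    (hm : m ≤ mΩ) {S : Set Ω} (hS : MeasurableSet[m] S) {Y ρ h : Ω → ℝ} (hY : MemLp Y 2 μ)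
    (hρ : μ[Y | m] =ᵐ[μ] ρ) (hh : μ[Y ^ 2 | m] =ᵐ[μ] ρ - h) :
    variance (S.indicator Y) μ
      = (∫ ω in S, ρ ω ∂μ) * (1 - ∫ ω in S, ρ ω ∂μ) - ∫ ω in S, h ω ∂μ := by
  have hρi : Integrable ρ μ := integrable_condExp.congr hρ
  have hhi : Integrable h μ := (hρi.sub (integrable_condExp (m := m) (f := Y ^ 2))).congr
    (by filter_upwards [hh] with ω hω; simp [hω])
  have hsq : S.indicator Y ^ 2 = S.indicator (Y ^ 2) := by
    funext ω; by_cases hω : ω ∈ S <;> simp [hω]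
  rw [variance_eq_sub (hY.indicator (hm S hS)), hsq, integral_indicator (hm S hS),
    integral_indicator (hm S hS),
    setIntegral_eq_of_condExp_ae_eq hm hS (hY.integrable one_le_two) hρ,
    setIntegral_eq_of_condExp_ae_eq hm hS (f := Y ^ 2) hY.integrable_sq hh,
    integral_sub' hρi.integrableOn hhi.integrableOn]
  ring

end MeanScore

theorem mar_variance_mean_score_beta_general
    {Ω : Type*} [mΩ : MeasurableSpace Ω] [StandardBorelSpace Ω] [Nonempty Ω]
    (μ : Measure Ω) [IsProbabilityMeasure μ] {d : ℕ}
    (T : Ω → ℝ) (A : Ω → (Fin d → ℝ)) (D V : Ω → ℝ)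
    (hD : Measurable D) (hV : Measurable V)
    (hDval : ∀ ω, D ω = 0 ∨ D ω = 1) (hVval : ∀ ω, V ω = 0 ∨ V ω = 1)
    (𝒢 : MeasurableSpace Ω)
    (h𝒢 : 𝒢 = MeasurableSpace.comap (fun ω => (T ω, A ω)) inferInstance)
    (h𝒢le : 𝒢 ≤ mΩ)
    (MAR : CondIndepFun (mΩ := mΩ) 𝒢 h𝒢le V D μ) (c : ℝ) :
    variance (fun ω => (if c ≤ T ω then (1 : ℝ) else 0)
        * (V ω * D ω + (1 - V ω) * (μ[D | 𝒢]) ω)) μ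
      = (μ {ω | c ≤ T ω ∧ D ω = 1}).toReal * (1 - (μ {ω | c ≤ T ω ∧ D ω = 1}).toReal)
        - ∫ ω, (1 - (μ[V | 𝒢]) ω) * (if c ≤ T ω then (1 : ℝ) else 0)
            * ((μ[D | 𝒢]) ω * (1 - (μ[D | 𝒢]) ω)) ∂μ := by
  set ρ := μ[D | 𝒢]
  set S := {ω | c ≤ T ω}
  have hS : MeasurableSet[𝒢] S :=
    h𝒢 ▸ ⟨{p | c ≤ p.1}, measurableSet_le measurable_const measurable_fst, rfl⟩
  have hρ : StronglyMeasurable[𝒢] ρ := stronglyMeasurable_condExp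
  have hρ1 : ∀ᵐ ω ∂μ, |ρ ω| ≤ 1 := abs_condExp_le_one_of_forall_eq_zero_or_one hDval
  have hρ2 : Integrable (ρ ^ 2) μ := Integrable.of_bound
    ((hρ.mono h𝒢le).aestronglyMeasurable.pow 2) 1 (by filter_upwards [hρ1] with ω hω; simpa)
  have hX : (fun ω => (if c ≤ T ω then (1 : ℝ) else 0) * (V ω * D ω + (1 - V ω) * ρ ω))
      = S.indicator (meanScore V D ρ) := by
    funext ω; by_cases hω : c ≤ T ω <;> simp [hω, S, meanScore]
  have hJ : ∫ ω, (1 - (μ[V | 𝒢]) ω) * (if c ≤ T ω then (1 : ℝ) else 0)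
        * (ρ ω * (1 - ρ ω)) ∂μ = ∫ ω in S, (1 - (μ[V | 𝒢]) ω) * (ρ ω * (1 - ρ ω)) ∂μ := by
    rw [← integral_indicator (h𝒢le S hS)]
    congr 1; funext ω; by_cases hω : c ≤ T ω <;> simp [hω, S]
  have hβ : (μ {ω | c ≤ T ω ∧ D ω = 1}).toReal = ∫ ω in S, ρ ω ∂μ := by
    rw [setIntegral_condExp h𝒢le (integrable_of_forall_eq_zero_or_one hD hDval) hS,
      setIntegral_eq_measureReal_inter_of_forall_eq_zero_or_one hD hDval]
    rfl
  rw [hX, hJ, hβ]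
  refine variance_indicator_eq_of_condExp_ae_eq h𝒢le hS
    (memLp_meanScore hV hD hVval hDval (hρ.mono h𝒢le).aestronglyMeasurable hρ1 2) ?_ ?_
  · filter_upwards [condExp_meanScore_ae_eq hV hD hVval hDval integrable_condExp MAR hρ]
      with ω h
    rw [h]; ring
  · rw [show meanScore V D ρ ^ 2 = meanScore V D (ρ ^ 2) from
      funext (meanScore_sq hVval hDval ρ)]
    filter_upwards [condExp_meanScore_ae_eq hV hD hVval hDval hρ2 MAR (hρ.pow 2)] with ω h
    simp only [h, Pi.sub_apply, Pi.pow_apply]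
    ring

/-- Under MAR, for any real cut point `c`, the variance of the
mean-score single-observation term `X = 1_{T ≥ c} · (V·D + (1 − V)·ρ)` equals
`Var(X) = β(1 − β) − E[(1 − π) · 1_{T ≥ c} · ρ(1 − ρ)]`, where `β = ℙ(T ≥ c, D = 1)`. -/
theorem mar_variance_mean_score_beta
    {Ω : Type*} [mΩ : MeasurableSpace Ω] [StandardBorelSpace Ω] [Nonempty Ω]
    (μ : Measure Ω) [IsProbabilityMeasure μ] {d : ℕ}
    (T : Ω → ℝ) (A : Ω → (Fin d → ℝ)) (D V : Ω → ℝ)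
    (hT : Measurable T) (hA : Measurable A) (hD : Measurable D) (hV : Measurable V)
    (hDval : ∀ ω, D ω = 0 ∨ D ω = 1) (hVval : ∀ ω, V ω = 0 ∨ V ω = 1)
    (𝒢 : MeasurableSpace Ω)
    (h𝒢 : 𝒢 = MeasurableSpace.comap (fun ω => (T ω, A ω)) inferInstance)
    (h𝒢le : 𝒢 ≤ mΩ)
    (MAR : CondIndepFun (mΩ := mΩ) 𝒢 h𝒢le V D μ) (c : ℝ) :
    variance (fun ω => (if c ≤ T ω then (1 : ℝ) else 0)
        * (V ω * D ω + (1 - V ω) * (μ[D | 𝒢]) ω)) μ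
      = (μ {ω | c ≤ T ω ∧ D ω = 1}).toReal * (1 - (μ {ω | c ≤ T ω ∧ D ω = 1}).toReal)
        - ∫ ω, (1 - (μ[V | 𝒢]) ω) * (if c ≤ T ω then (1 : ℝ) else 0)
            * ((μ[D | 𝒢]) ω * (1 - (μ[D | 𝒢]) ω)) ∂μ :=
  mar_variance_mean_score_beta_general (mΩ := mΩ) μ T A D V hD hV hDval hVval 𝒢 h𝒢 h𝒢le MAR c
end

section
/- Under the MAR assumption, the variance of the mean-score single-observation term M = V·D + (1 − V)·ρ equals Var(M) = θ(1 − θ) − E[ (1 − π) · ρ(1 − ρ) ], where θ = ℙ(D = 1). -/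
open MeasureTheory ProbabilityTheory

/-!
Since `V` and `D` are `{0,1}`-valued, `M = V D + (1 - V) ρ` and `M² = V D + (1 - V) ρ²`. Under MAR,
`E[V D | 𝒢] = π ρ`, and pulling the `𝒢`-measurable factors `ρ`, `ρ²` out of the conditional
expectation gives `E[M | 𝒢] = π ρ + (1 - π) ρ = ρ` and `E[M² | 𝒢] = π ρ + (1 - π) ρ²
= ρ - (1 - π) ρ (1 - ρ)`. Taking expectations, `E[M] = E[ρ] = θ` and
`E[M²] = θ - E[(1 - π) ρ (1 - ρ)]`, so `Var M = E[M²] - θ²` is the claimed value.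
-/

section ZeroOne

lemma sq_mul_add_one_sub_mul {v d x : ℝ} (hv : v = 0 ∨ v = 1) (hd : d = 0 ∨ d = 1) :
    (v * d + (1 - v) * x) ^ 2 = v * d + (1 - v) * x ^ 2 := by
  rcases hv with rfl | rfl <;> rcases hd with rfl | rfl <;> ring

lemma norm_mul_add_one_sub_mul_le {v x y C : ℝ} (hv : v = 0 ∨ v = 1) (hx : ‖x‖ ≤ C)
    (hy : ‖y‖ ≤ C) : ‖v * x + (1 - v) * y‖ ≤ C := by
  rcases hv with rfl | rfl <;> simpa

variable {Ω : Type*} {mΩ : MeasurableSpace Ω} {μ : Measure Ω} {f : Ω → ℝ}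

lemma indicator_preimage_one_eq_self (hf : ∀ ω, f ω = 0 ∨ f ω = 1) :
    (f ⁻¹' {1}).indicator (fun _ ↦ (1 : ℝ)) = f := by
  funext ω
  rcases hf ω with h | h <;> simp [h]

lemma norm_le_one_of_zero_or_one (hf : ∀ ω, f ω = 0 ∨ f ω = 1) (ω : Ω) : ‖f ω‖ ≤ 1 := by
  rcases hf ω with h | h <;> simp [h]

lemma integrable_of_zero_or_one [IsFiniteMeasure μ] (hfm : Measurable f)
    (hf : ∀ ω, f ω = 0 ∨ f ω = 1) : Integrable f μ :=
  .of_bound hfm.aestronglyMeasurable 1 (.of_forall (norm_le_one_of_zero_or_one hf))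

lemma integral_eq_measureReal_of_zero_or_one (hfm : Measurable f)
    (hf : ∀ ω, f ω = 0 ∨ f ω = 1) : ∫ ω, f ω ∂μ = μ.real {ω | f ω = 1} := by
  conv_lhs => rw [← indicator_preimage_one_eq_self hf]
  exact integral_indicator_one (hfm (measurableSet_singleton 1))

lemma ae_norm_condExp_le_one_of_zero_or_one {m : MeasurableSpace Ω}
    (hf : ∀ ω, f ω = 0 ∨ f ω = 1) : ∀ᵐ ω ∂μ, ‖μ[f | m] ω‖ ≤ 1 :=
  ae_bdd_abs_condExp_of_ae_bdd_abs (.of_forall (norm_le_one_of_zero_or_one hf))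

end ZeroOne

section CondExp

variable {Ω : Type*} {m mΩ : MeasurableSpace Ω} {μ : Measure Ω} [IsFiniteMeasure μ]

lemma condExp_mul_ae_eq_mul_condExp_of_zero_or_one [StandardBorelSpace Ω] {hm : m ≤ mΩ}
    {f g : Ω → ℝ} (hfm : Measurable f) (hgm : Measurable g) (hf : ∀ ω, f ω = 0 ∨ f ω = 1)
    (hg : ∀ ω, g ω = 0 ∨ g ω = 1) (hfg : CondIndepFun m hm f g μ) :
    μ[f * g | m] =ᵐ[μ] μ[f | m] * μ[g | m] := by
  have h := (condIndepFun_iff_condExp_inter_preimage_eq_mul hfm hgm).mp hfg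
    {1} {1} (measurableSet_singleton 1) (measurableSet_singleton 1)
  have hinter : (f ⁻¹' {1} ∩ g ⁻¹' {1}).indicator (fun _ ↦ (1 : ℝ)) = f * g := by
    funext ω
    rcases hf ω with h₁ | h₁ <;> rcases hg ω with h₂ | h₂ <;> simp [h₁, h₂]
  rwa [hinter, indicator_preimage_one_eq_self hf, indicator_preimage_one_eq_self hg] at h

lemma condExp_add_one_sub_mul (hm : m ≤ mΩ) {Y V g : Ω → ℝ} (hY : Integrable Y μ)
    (hV : Integrable V μ) (hg : StronglyMeasurable[m] g) {C : ℝ}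
    (hgC : ∀ᵐ ω ∂μ, ‖g ω‖ ≤ C) :
    μ[fun ω ↦ Y ω + (1 - V ω) * g ω | m]
      =ᵐ[μ] fun ω ↦ μ[Y | m] ω + (1 - μ[V | m] ω) * g ω := by
  have h1V : Integrable (fun ω ↦ 1 - V ω) μ := (integrable_const 1).sub hV
  have hprod : Integrable (fun ω ↦ (1 - V ω) * g ω) μ :=
    h1V.mul_bdd (hg.mono hm).aestronglyMeasurable hgC
  have hcond1V : μ[fun ω ↦ 1 - V ω | m] =ᵐ[μ] fun ω ↦ 1 - μ[V | m] ω := by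
    filter_upwards [condExp_sub (integrable_const 1) hV m] with ω hω
    rw [show (fun ω ↦ 1 - V ω) = (fun _ ↦ (1 : ℝ)) - V from rfl, hω, Pi.sub_apply,
      condExp_const hm]
  have hpull := condExp_mul_of_stronglyMeasurable_right hg hprod h1V
  filter_upwards [condExp_add hY hprod m, hpull, hcond1V] with ω hadd hmul h1
  rw [show (fun ω ↦ Y ω + (1 - V ω) * g ω) = Y + fun ω ↦ (1 - V ω) * g ω from rfl, hadd,
    Pi.add_apply]
  rw [show (fun ω ↦ (1 - V ω) * g ω) = (fun ω ↦ 1 - V ω) * g from rfl, hmul, Pi.mul_apply, h1]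

lemma integral_mul_add_one_sub_mul_of_condIndepFun [StandardBorelSpace Ω] (hm : m ≤ mΩ)
    {V D g : Ω → ℝ} (hVm : Measurable V) (hDm : Measurable D) (hV : ∀ ω, V ω = 0 ∨ V ω = 1)
    (hD : ∀ ω, D ω = 0 ∨ D ω = 1) (hVD : CondIndepFun m hm V D μ)
    (hg : StronglyMeasurable[m] g) {C : ℝ} (hgC : ∀ᵐ ω ∂μ, ‖g ω‖ ≤ C) :
    ∫ ω, V ω * D ω + (1 - V ω) * g ω ∂μ
      = ∫ ω, μ[D | m] ω ∂μ - ∫ ω, (1 - μ[V | m] ω) * (μ[D | m] ω - g ω) ∂μ := by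
  have hVi : Integrable V μ := integrable_of_zero_or_one hVm hV
  have hVDi : Integrable (fun ω ↦ V ω * D ω) μ :=
    hVi.mul_bdd hDm.aestronglyMeasurable (.of_forall (norm_le_one_of_zero_or_one hD))
  have hgi : Integrable g μ := .of_bound (hg.mono hm).aestronglyMeasurable C hgC
  have h1π : ∀ᵐ ω ∂μ, ‖1 - μ[V | m] ω‖ ≤ 2 := by
    filter_upwards [ae_norm_condExp_le_one_of_zero_or_one hV] with ω hω
    exact (norm_sub_le _ _).trans (by rw [norm_one]; linarith)
  have hrest : Integrable (fun ω ↦ (1 - μ[V | m] ω) * (μ[D | m] ω - g ω)) μ :=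
    (integrable_condExp.sub hgi).bdd_mul (aestronglyMeasurable_const.sub integrable_condExp.1)
      h1π
  rw [← integral_sub integrable_condExp hrest, ← integral_condExp hm]
  refine integral_congr_ae ?_
  filter_upwards [condExp_add_one_sub_mul hm hVDi hVi hg hgC,
    condExp_mul_ae_eq_mul_condExp_of_zero_or_one hVm hDm hV hD hVD] with ω hadd hmul
  rw [hadd, show (fun ω ↦ V ω * D ω) = V * D from rfl, hmul, Pi.mul_apply]
  ring

end CondExp

theorem mar_variance_mean_score_theta_general
    {Ω : Type*} [mΩ : MeasurableSpace Ω] [StandardBorelSpace Ω]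
    (μ : Measure Ω) [IsProbabilityMeasure μ]
    (D V : Ω → ℝ)
    (hD : Measurable D) (hV : Measurable V)
    (hDval : ∀ ω, D ω = 0 ∨ D ω = 1) (hVval : ∀ ω, V ω = 0 ∨ V ω = 1)
    (𝒢 : MeasurableSpace Ω)
    (h𝒢le : 𝒢 ≤ mΩ)
    (MAR : CondIndepFun (mΩ := mΩ) 𝒢 h𝒢le V D μ) :
    variance (fun ω => V ω * D ω + (1 - V ω) * (μ[D | 𝒢]) ω) μ
      = (μ {ω | D ω = 1}).toReal * (1 - (μ {ω | D ω = 1}).toReal)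
        - ∫ ω, (1 - (μ[V | 𝒢]) ω) * ((μ[D | 𝒢]) ω * (1 - (μ[D | 𝒢]) ω)) ∂μ := by
  have hρm : StronglyMeasurable[𝒢] (μ[D | 𝒢]) := stronglyMeasurable_condExp
  have hρ : ∀ᵐ ω ∂μ, ‖μ[D | 𝒢] ω‖ ≤ 1 := ae_norm_condExp_le_one_of_zero_or_one hDval
  have hM : ∫ ω, V ω * D ω + (1 - V ω) * μ[D | 𝒢] ω ∂μ = ∫ ω, μ[D | 𝒢] ω ∂μ := by
    simp [integral_mul_add_one_sub_mul_of_condIndepFun h𝒢le hV hD hVval hDval MAR hρm hρ]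
  have hM2 : ∫ ω, (V ω * D ω + (1 - V ω) * μ[D | 𝒢] ω) ^ 2 ∂μ
      = ∫ ω, μ[D | 𝒢] ω ∂μ
        - ∫ ω, (1 - μ[V | 𝒢] ω) * (μ[D | 𝒢] ω * (1 - μ[D | 𝒢] ω)) ∂μ := by
    have hρ2 : ∀ᵐ ω ∂μ, ‖μ[D | 𝒢] ω ^ 2‖ ≤ 1 := hρ.mono fun ω h ↦ by
      rw [norm_pow]; exact pow_le_one₀ (norm_nonneg _) h
    simp_rw [sq_mul_add_one_sub_mul (hVval _) (hDval _),
      integral_mul_add_one_sub_mul_of_condIndepFun (g := fun ω ↦ μ[D | 𝒢] ω ^ 2) h𝒢le hV hD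
        hVval hDval MAR (hρm.pow 2) hρ2]
    congr 2
    ext ω
    ring
  have hMmemLp : MemLp (fun ω ↦ V ω * D ω + (1 - V ω) * μ[D | 𝒢] ω) 2 μ := by
    refine .of_bound (by fun_prop) 1 (hρ.mono fun ω hω ↦ ?_)
    exact norm_mul_add_one_sub_mul_le (hVval ω) (norm_le_one_of_zero_or_one hDval ω) hω
  have hρθ : ∫ ω, μ[D | 𝒢] ω ∂μ = (μ {ω | D ω = 1}).toReal := by
    rw [integral_condExp h𝒢le, integral_eq_measureReal_of_zero_or_one hD hDval,
      measureReal_def]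
  rw [variance_eq_sub hMmemLp]
  simp only [Pi.pow_apply]
  rw [hM2, hM, hρθ]
  ring

/-- Under MAR, the variance of the mean-score single-observation term
`M = V·D + (1 − V)·ρ` equals `Var(M) = θ(1 − θ) − E[(1 − π) · ρ(1 − ρ)]`, where
`θ = ℙ(D = 1)`. -/
theorem mar_variance_mean_score_theta
    {Ω : Type*} [mΩ : MeasurableSpace Ω] [StandardBorelSpace Ω] [Nonempty Ω]
    (μ : Measure Ω) [IsProbabilityMeasure μ] {d : ℕ}
    (T : Ω → ℝ) (A : Ω → (Fin d → ℝ)) (D V : Ω → ℝ)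
    (hT : Measurable T) (hA : Measurable A) (hD : Measurable D) (hV : Measurable V)
    (hDval : ∀ ω, D ω = 0 ∨ D ω = 1) (hVval : ∀ ω, V ω = 0 ∨ V ω = 1)
    (𝒢 : MeasurableSpace Ω)
    (h𝒢 : 𝒢 = MeasurableSpace.comap (fun ω => (T ω, A ω)) inferInstance)
    (h𝒢le : 𝒢 ≤ mΩ)
    (MAR : CondIndepFun (mΩ := mΩ) 𝒢 h𝒢le V D μ) :
    variance (fun ω => V ω * D ω + (1 - V ω) * (μ[D | 𝒢]) ω) μ
      = (μ {ω | D ω = 1}).toReal * (1 - (μ {ω | D ω = 1}).toReal)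
        - ∫ ω, (1 - (μ[V | 𝒢]) ω) * ((μ[D | 𝒢]) ω * (1 - (μ[D | 𝒢]) ω)) ∂μ :=
  mar_variance_mean_score_theta_general (mΩ := mΩ) μ D V hD hV hDval hVval 𝒢 h𝒢le MAR
end
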